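/- Every graph G in H₄ \ H₄* satisfies χ(G) = |S₁| + |S₃| + 2 (assuming |S₁| ≥ |S₂|), and moreover |S₂| + 3 ≤ χ(G). -/

import Mathlib

open SimpleGraph

/-- A proper coloring of `G` with colors in `Fin ℓ`. -/
def IsProperColoring {V : Type*} (G : SimpleGraph V) (ℓ : ℕ) (f : V → Fin ℓ) : Prop :=
  ∀ ⦃a b : V⦄, G.Adj a b → f a ≠ f b

/-- A walk in the reconfiguration graph `R_ℓ(G)`: a sequence `c 0, c 1, …, c m` of proper
`ℓ`-colorings of `G` in which consecutive colorings differ on at most one vertex. -/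
def IsRecolorSeq {V : Type*} (G : SimpleGraph V) (ℓ m : ℕ) (c : ℕ → V → Fin ℓ) : Prop :=
  (∀ i ≤ m, IsProperColoring G ℓ (c i)) ∧
    ∀ i < m, ∀ a b : V, a ≠ b → c i a ≠ c (i + 1) a → c i b = c (i + 1) b

/-- The number of times the vertex `a` is recolored along the sequence `c 0, …, c m`. -/
def recolorCount {V : Type*} {ℓ : ℕ} (m : ℕ) (c : ℕ → V → Fin ℓ) (a : V) : ℕ :=
  ((Finset.range m).filter fun i => c i a ≠ c (i + 1) a).card

/-- The cycle `Cₙ` on `Fin n` (for `n ≥ 3`). -/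
def cyc (n : ℕ) [NeZero n] : SimpleGraph (Fin n) := SimpleGraph.fromRel fun a b => a + 1 = b

/-- The graph `P₂ + P₃`, the disjoint union of an edge and a path on three vertices. -/
def p2p3 : SimpleGraph (Fin 5) := SimpleGraph.fromRel fun a b =>
  (a = 0 ∧ b = 1) ∨ (a = 2 ∧ b = 3) ∨ (a = 3 ∧ b = 4)

/-- Adjacency in the 6-cycle on `Fin 6` (indices mod 6). -/
def c6adj (i j : Fin 6) : Prop := i + 1 = j ∨ j + 1 = i

/-- The class `H₄`: six vertices `v 0, …, v 5` inducing a 6-cycle and three mutually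
disjoint cliques `S₁, S₂, S₃` with `S₁` nonempty; `S₁` is complete to `{v₁,v₂,v₃,v₆}`,
`S₂` to `{v₂,v₃,v₄,v₅}`, `S₃` to `{v₁,v₂,v₃,v₄}` and to `S₁ ∪ S₂`; no other edges.
(Here `vᵢ` of the paper is `v (i-1)`.) -/
structure H4Data {V : Type*} (G : SimpleGraph V) where
  v : Fin 6 → V
  S1 : Finset V
  S2 : Finset V
  S3 : Finset V
  inj : Function.Injective v
  notin : ∀ i, v i ∉ S1 ∧ v i ∉ S2 ∧ v i ∉ S3
  d12 : Disjoint S1 S2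
  d13 : Disjoint S1 S3
  d23 : Disjoint S2 S3
  ne1 : S1.Nonempty
  cover : ∀ x : V, (x ∈ S1 ∨ x ∈ S2 ∨ x ∈ S3) ∨ ∃ i, x = v i
  adj_iff : ∀ x y : V, G.Adj x y ↔ x ≠ y ∧
    ((∃ i j : Fin 6, x = v i ∧ y = v j ∧ c6adj i j) ∨
     (x ∈ S1 ∧ y ∈ S1) ∨ (x ∈ S2 ∧ y ∈ S2) ∨ (x ∈ S3 ∧ y ∈ S3) ∨
     (x ∈ S1 ∧ (y = v 0 ∨ y = v 1 ∨ y = v 2 ∨ y = v 5)) ∨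
     (y ∈ S1 ∧ (x = v 0 ∨ x = v 1 ∨ x = v 2 ∨ x = v 5)) ∨
     (x ∈ S2 ∧ (y = v 1 ∨ y = v 2 ∨ y = v 3 ∨ y = v 4)) ∨
     (y ∈ S2 ∧ (x = v 1 ∨ x = v 2 ∨ x = v 3 ∨ x = v 4)) ∨
     (x ∈ S3 ∧ (y = v 0 ∨ y = v 1 ∨ y = v 2 ∨ y = v 3)) ∨
     (y ∈ S3 ∧ (x = v 0 ∨ x = v 1 ∨ x = v 2 ∨ x = v 3)) ∨
     (x ∈ S3 ∧ (y ∈ S1 ∨ y ∈ S2)) ∨ (y ∈ S3 ∧ (x ∈ S1 ∨ x ∈ S2)))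

/-!
The clique `S₁ ∪ S₃ ∪ {v₂, v₃}` gives `χ(G) ≥ |S₁| + |S₃| + 2`. Conversely, colour `S₁` and `S₂`
from the same first `|S₁|` colours (possible as `|S₂| ≤ |S₁|` and `S₁`, `S₂` are anticomplete),
`S₃` with the next `|S₃|` colours, and the 6-cycle alternately with the last two colours.
The bound `|S₂| + 3 ≤ χ(G)` is then arithmetic: `G ∉ H₄*` forces `S₃ ≠ ∅` or `|S₂| < |S₁|`.
-/

theorem SimpleGraph.chromaticNumber_le_of_forall_lt {V : Type*} {G : SimpleGraph V} {n : ℕ}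
    (c : V → ℕ) (hc : ∀ x, c x < n) (hadj : ∀ ⦃x y⦄, G.Adj x y → c x ≠ c y) :
    G.chromaticNumber ≤ n := by
  simpa using (Coloring.mk (fun x => (⟨c x, hc x⟩ : Fin n))
    fun hxy => by simpa [Fin.ext_iff] using hadj hxy).colorable.chromaticNumber_le

lemma c6adj_even_iff {i j : Fin 6} (hij : c6adj i j) : Even (i : ℕ) ↔ ¬ Even (j : ℕ) := by
  unfold c6adj at hij
  revert i j
  decide

namespace H4Data

variable {V : Type*} {G : SimpleGraph V} (h : H4Data G)

open Classical in
noncomputable def color (x : V) : ℕ :=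
  if hx : x ∈ h.S1 then h.S1.equivFin ⟨x, hx⟩
  else if hx : x ∈ h.S2 then h.S2.equivFin ⟨x, hx⟩
  else if hx : x ∈ h.S3 then h.S1.card + h.S3.equivFin ⟨x, hx⟩
  else if ∃ i : Fin 6, x = h.v i ∧ Even (i : ℕ) then h.S1.card + h.S3.card + 1
  else h.S1.card + h.S3.card

lemma color_of_mem_S1 {x : V} (hx : x ∈ h.S1) : h.color x = h.S1.equivFin ⟨x, hx⟩ := by
  simp [color, hx]

lemma color_of_mem_S2 {x : V} (hx : x ∈ h.S2) : h.color x = h.S2.equivFin ⟨x, hx⟩ := by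
  simp [color, hx, Finset.disjoint_right.mp h.d12 hx]

lemma color_of_mem_S3 {x : V} (hx : x ∈ h.S3) :
    h.color x = h.S1.card + h.S3.equivFin ⟨x, hx⟩ := by
  simp [color, hx, Finset.disjoint_right.mp h.d13 hx, Finset.disjoint_right.mp h.d23 hx]

lemma color_v (i : Fin 6) :
    h.color (h.v i) = h.S1.card + h.S3.card + if Even (i : ℕ) then 1 else 0 := by
  have hi : (∃ j : Fin 6, h.v i = h.v j ∧ Even (j : ℕ)) ↔ Even (i : ℕ) :=
    ⟨fun ⟨j, hij, hj⟩ => h.inj hij ▸ hj, fun hi => ⟨i, rfl, hi⟩⟩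
  simp only [color, dif_neg (h.notin i).1, dif_neg (h.notin i).2.1, dif_neg (h.notin i).2.2, hi]
  split_ifs <;> rfl

lemma color_lt_of_mem_S1 {x : V} (hx : x ∈ h.S1) : h.color x < h.S1.card := by
  simp [h.color_of_mem_S1 hx]

lemma color_lt_of_mem_S2 {x : V} (hx : x ∈ h.S2) : h.color x < h.S2.card := by
  simp [h.color_of_mem_S2 hx]

lemma color_mem_Ico_of_mem_S3 {x : V} (hx : x ∈ h.S3) :
    h.color x ∈ Set.Ico h.S1.card (h.S1.card + h.S3.card) := by
  simp [h.color_of_mem_S3 hx]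

lemma injOn_color_S1 : Set.InjOn h.color h.S1 := fun x hx y hy hxy => by
  rw [h.color_of_mem_S1 hx, h.color_of_mem_S1 hy] at hxy
  simpa using h.S1.equivFin.injective (Fin.ext hxy)

lemma injOn_color_S2 : Set.InjOn h.color h.S2 := fun x hx y hy hxy => by
  rw [h.color_of_mem_S2 hx, h.color_of_mem_S2 hy] at hxy
  simpa using h.S2.equivFin.injective (Fin.ext hxy)

lemma injOn_color_S3 : Set.InjOn h.color h.S3 := fun x hx y hy hxy => by
  rw [h.color_of_mem_S3 hx, h.color_of_mem_S3 hy, Nat.add_left_cancel_iff] at hxy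
  simpa using h.S3.equivFin.injective (Fin.ext hxy)

lemma le_color_v (i : Fin 6) : h.S1.card + h.S3.card ≤ h.color (h.v i) := by
  rw [h.color_v]; omega

lemma color_lt_of_mem_S1_or_S2 (hge : h.S2.card ≤ h.S1.card) {x : V} (hx : x ∈ h.S1 ∨ x ∈ h.S2) :
    h.color x < h.S1.card := by
  rcases hx with hx | hx
  · exact h.color_lt_of_mem_S1 hx
  · exact (h.color_lt_of_mem_S2 hx).trans_le hge

lemma color_lt_of_mem_cliques (hge : h.S2.card ≤ h.S1.card) {x : V}
    (hx : x ∈ h.S1 ∨ x ∈ h.S2 ∨ x ∈ h.S3) : h.color x < h.S1.card + h.S3.card := by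
  rcases hx with hx | hx | hx
  · exact (h.color_lt_of_mem_S1_or_S2 hge (.inl hx)).trans_le (Nat.le_add_right _ _)
  · exact (h.color_lt_of_mem_S1_or_S2 hge (.inr hx)).trans_le (Nat.le_add_right _ _)
  · exact (h.color_mem_Ico_of_mem_S3 hx).2

lemma color_lt (hge : h.S2.card ≤ h.S1.card) (x : V) :
    h.color x < h.S1.card + h.S3.card + 2 := by
  rcases h.cover x with hx | ⟨i, rfl⟩
  · have := h.color_lt_of_mem_cliques hge hx; omega
  · rw [h.color_v]; split_ifs <;> omega

lemma color_ne_color_v (hge : h.S2.card ≤ h.S1.card) {x : V}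
    (hx : x ∈ h.S1 ∨ x ∈ h.S2 ∨ x ∈ h.S3) (i : Fin 6) : h.color x ≠ h.color (h.v i) :=
  ((h.color_lt_of_mem_cliques hge hx).trans_le (h.le_color_v i)).ne

lemma color_ne_of_mem_S3 (hge : h.S2.card ≤ h.S1.card) {x y : V} (hx : x ∈ h.S3)
    (hy : y ∈ h.S1 ∨ y ∈ h.S2) : h.color x ≠ h.color y :=
  ((h.color_lt_of_mem_S1_or_S2 hge hy).trans_le (h.color_mem_Ico_of_mem_S3 hx).1).ne'

lemma color_ne_of_adj (hge : h.S2.card ≤ h.S1.card) ⦃x y : V⦄ (hxy : G.Adj x y) :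
    h.color x ≠ h.color y := by
  obtain ⟨hne, hxy⟩ := (h.adj_iff x y).1 hxy
  rcases hxy with ⟨i, j, rfl, rfl, hij⟩ | ⟨hx, hy⟩ | ⟨hx, hy⟩ | ⟨hx, hy⟩ | ⟨hs, hv⟩ | ⟨hs, hv⟩ |
    ⟨hs, hv⟩ | ⟨hs, hv⟩ | ⟨hs, hv⟩ | ⟨hs, hv⟩ | ⟨hx, hy⟩ | ⟨hy, hx⟩
  · have := c6adj_even_iff hij
    rw [h.color_v, h.color_v]
    split_ifs <;> first | omega | tauto
  · exact h.injOn_color_S1.ne hx hy hne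
  · exact h.injOn_color_S2.ne hx hy hne
  · exact h.injOn_color_S3.ne hx hy hne
  all_goals first
    | exact h.color_ne_of_mem_S3 hge hx hy
    | exact (h.color_ne_of_mem_S3 hge hy hx).symm
    | rcases hv with rfl | rfl | rfl | rfl <;>
        first
        | exact h.color_ne_color_v hge (by tauto) _
        | exact (h.color_ne_color_v hge (by tauto) _).symm

lemma v_two_notMem_S1_disjUnion_S3 : h.v 2 ∉ h.S1.disjUnion h.S3 h.d13 := by
  simp [(h.notin 2).1, (h.notin 2).2.2]

lemma v_one_notMem_cons :
    h.v 1 ∉ (h.S1.disjUnion h.S3 h.d13).cons (h.v 2) h.v_two_notMem_S1_disjUnion_S3 := by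
  simp [h.inj.ne (show (1 : Fin 6) ≠ 2 by decide), (h.notin 1).1, (h.notin 1).2.2]

def clique : Finset V :=
  .cons (h.v 1) (.cons (h.v 2) (h.S1.disjUnion h.S3 h.d13) h.v_two_notMem_S1_disjUnion_S3)
    h.v_one_notMem_cons

lemma isClique_clique : G.IsClique (h.clique : Set V) := by
  intro x hx y hy hne
  simp only [clique, Finset.coe_cons, Finset.coe_disjUnion, Set.mem_insert_iff, Set.mem_union,
    Finset.mem_coe] at hx hy
  refine (h.adj_iff x y).2 ⟨hne, ?_⟩
  rcases hx with rfl | rfl | hx | hx <;> rcases hy with rfl | rfl | hy | hy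
  all_goals first
    | exact absurd rfl hne
    | exact .inl ⟨1, 2, rfl, rfl, .inl rfl⟩
    | exact .inl ⟨2, 1, rfl, rfl, .inr rfl⟩
    | simp [*]

lemma card_clique : h.clique.card = h.S1.card + h.S3.card + 2 := by
  simp [clique]

theorem chromaticNumber_eq (hge : h.S2.card ≤ h.S1.card) :
    G.chromaticNumber = ((h.S1.card + h.S3.card + 2 : ℕ) : ℕ∞) :=
  le_antisymm (chromaticNumber_le_of_forall_lt h.color (h.color_lt hge) (h.color_ne_of_adj hge))
    (h.card_clique ▸ (isClique_clique h).card_le_chromaticNumber)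

lemma card_S2_add_three_le (hstar : ¬ (h.S3 = ∅ ∧ h.S1.card = h.S2.card))
    (hge : h.S2.card ≤ h.S1.card) : h.S2.card + 3 ≤ h.S1.card + h.S3.card + 2 := by
  rw [← Finset.card_eq_zero] at hstar
  omega

end H4Data

theorem stmt12_general {V : Type*} {G : SimpleGraph V} (h : H4Data G)
    (hstar : ¬ (h.S3 = ∅ ∧ h.S1.card = h.S2.card)) (hge : h.S2.card ≤ h.S1.card) :
    G.chromaticNumber = ((h.S1.card + h.S3.card + 2 : ℕ) : ℕ∞) ∧
    ((h.S2.card + 3 : ℕ) : ℕ∞) ≤ G.chromaticNumber := by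
  rw [h.chromaticNumber_eq hge]
  exact ⟨rfl, Nat.cast_le.2 (h.card_S2_add_three_le hstar hge)⟩

/-- for `G ∈ H₄ \ H₄*` with `|S₁| ≥ |S₂|`, `χ(G) = |S₁| + |S₃| + 2`,
and moreover `|S₂| + 3 ≤ χ(G)`. -/
theorem stmt12 {V : Type*} [Fintype V] {G : SimpleGraph V} (h : H4Data G)
    (hstar : ¬ (h.S3 = ∅ ∧ h.S1.card = h.S2.card)) (hge : h.S2.card ≤ h.S1.card) :
    G.chromaticNumber = ((h.S1.card + h.S3.card + 2 : ℕ) : ℕ∞) ∧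
    ((h.S2.card + 3 : ℕ) : ℕ∞) ≤ G.chromaticNumber :=
  stmt12_general h hstar hge
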